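/- Suppose h(x)=med(f(x),h(x),g(x)) for all x∈E. Then there is exactly one measurable function V:E→ℝ satisfying the equation: V(x)=med(f(x), αΠV(x), g(x)) for all x with f(x)<g(x), and V(x)=h(x) for all x with f(x)≥g(x). -/

import Mathlib

open MeasureTheory ProbabilityTheory Set Filter Topology

noncomputable section

namespace DynkinGame

variable {E : Type*} [MeasurableSpace E] {Ω : Type*} [MeasurableSpace Ω]

/-- Setup for a discrete-time Markovian Dynkin game: a time-homogeneous Markov process `X`
with Markov kernel `K` and laws `P x` (starting from `x`), for each player `i = 0, 1` an iid
sequence of `U(0,1)`-distributed randomization devices `ξ i n`, the whole family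
`(ξ i n)_{i,n}` together with the trajectory of `X` being mutually independent,
and a discount factor `α ∈ (0,1)`. -/
structure Setup (E : Type*) [MeasurableSpace E] (Ω : Type*) [MeasurableSpace Ω] where
  /-- the law of the game started at `x` -/
  P : E → Measure Ω
  isProb : ∀ x, IsProbabilityMeasure (P x)
  /-- the state process -/
  X : ℕ → Ω → E
  measX : ∀ n, Measurable (X n)
  /-- the randomization devices of the two players -/
  ξ : Fin 2 → ℕ → Ω → ℝ
  measξ : ∀ i n, Measurable (ξ i n)
  /-- the Markov kernel of `X` -/
  K : Kernel E E
  isMarkovKernel : IsMarkovKernel K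
  /-- the discount factor -/
  α : ℝ
  α_pos : 0 < α
  α_lt_one : α < 1
  /-- `X₀ = x` holds `P x`-a.s. -/
  init : ∀ x, ∀ᵐ ω ∂ P x, X 0 ω = x
  /-- the Markov property of `X` with transition kernel `K`, expressed through
  finite-dimensional distributions tested against bounded measurable functions -/
  markov : ∀ (x : E) (n : ℕ) (φ : (Fin (n + 1) → E) → ℝ) (F : E → ℝ),
    Measurable φ → Measurable F → (∃ C, ∀ v, |φ v| ≤ C) → (∃ C, ∀ y, |F y| ≤ C) →
    ∫ ω, φ (fun k => X k ω) * F (X (n + 1) ω) ∂ P x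
      = ∫ ω, φ (fun k => X k ω) * (∫ y, F y ∂ K (X n ω)) ∂ P x
  /-- each `ξ i n` is uniformly distributed on `[0,1]` -/
  unif : ∀ (x : E) (i : Fin 2) (n : ℕ),
    Measure.map (ξ i n) (P x) = volume.restrict (Icc (0 : ℝ) 1)
  /-- the random variables `ξ i n` (`i = 0,1`, `n ∈ ℕ`) and the trajectory of `X`
  are mutually independent -/
  indep : ∀ x : E, iIndep
    (fun j : Option (Fin 2 × ℕ) =>
      match j with
      | none => MeasurableSpace.comap (fun ω k => X k ω) inferInstance
      | some (i, n) => MeasurableSpace.comap (ξ i n) inferInstance)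
    (P x)

/-- The filtration `σ(X₀,…,Xₙ, ξ₀⁽ⁱ⁾,…,ξₙ⁽ⁱ⁾)` of player `i`. -/
def Setup.filt (S : Setup E Ω) (i : Fin 2) (n : ℕ) : MeasurableSpace Ω :=
  (⨆ k ∈ Iic n, MeasurableSpace.comap (S.X k) inferInstance) ⊔
    ⨆ k ∈ Iic n, MeasurableSpace.comap (S.ξ i k) inferInstance

/-- The admissible stopping times `𝒯ᵢ` of player `i`: stopping times with respect to the
filtration `σ(X₀,…,Xₙ, ξ₀⁽ⁱ⁾,…,ξₙ⁽ⁱ⁾)`, with values in `ℕ∞`. -/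
def Setup.Adm (S : Setup E Ω) (i : Fin 2) : Set (Ω → ℕ∞) :=
  {τ | ∀ n : ℕ, MeasurableSet[S.filt i n] {ω | τ ω ≤ (n : ℕ∞)}}

/-- The Markovian randomized stopping time `τᵖ = inf {n : p (Xₙ) ≥ ξₙ⁽ⁱ⁾}` (with `inf ∅ = ∞`). -/
def Setup.mrst (S : Setup E Ω) (i : Fin 2) (p : E → ℝ) (ω : Ω) : ℕ∞ :=
  ⨅ n ∈ {n : ℕ | S.ξ i n ω ≤ p (S.X n ω)}, (n : ℕ∞)

/-- The discounted payoff `α ^ τ • φ (X_τ)`, read as `0` on `{τ = ∞}`. -/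
def Setup.disc (S : Setup E Ω) (φ : E → ℝ) (τ : Ω → ℕ∞) (ω : Ω) : ℝ :=
  if τ ω = ⊤ then 0 else S.α ^ (τ ω).toNat * φ (S.X (τ ω).toNat ω)

/-- Pathwise reward of a player using stopping time `σ` against the opponent's `τ`:
`α^σ f(X_σ) 1{σ<τ} + α^τ g(X_τ) 1{τ<σ} + α^σ h(X_σ) 1{σ=τ<∞}`. -/
def Setup.payoff (S : Setup E Ω) (f g h : E → ℝ) (σ τ : Ω → ℕ∞) (ω : Ω) : ℝ :=
  (if σ ω < τ ω then S.disc f σ ω else 0) +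
    (if τ ω < σ ω then S.disc g τ ω else 0) +
      (if σ ω = τ ω then S.disc h σ ω else 0)

/-- Expected reward `J(x; σ, τ)` of the player using stopping time `σ` against `τ`. -/
def Setup.J (S : Setup E Ω) (f g h : E → ℝ) (σ τ : Ω → ℕ∞) (x : E) : ℝ :=
  ∫ ω, S.payoff f g h σ τ ω ∂ S.P x

/-- A Markovian (randomized) stopping strategy: a measurable function `E → [0,1]`. -/
def IsStrategy (p : E → ℝ) : Prop := Measurable p ∧ ∀ x, p x ∈ Icc (0 : ℝ) 1

/-- A pure stopping strategy. -/
def IsPure (p : E → ℝ) : Prop := ∀ x, p x = 0 ∨ p x = 1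

/-- `ΠV(x) = ∫ V dΠ(x,·)`, the integral with respect to the transition kernel. -/
def Setup.kint (S : Setup E Ω) (V : E → ℝ) (x : E) : ℝ := ∫ y, V y ∂ S.K x

/-- `E_x [sup_n φ(X̃ₙ)] < ∞` for every `x`, where `X̃` is the process `X` killed at each step
independently with probability `1 - α` (and `φ` vanishes at the cemetery state); equivalently,
with an independent geometric killing time `T`,
`E_x[sup_{n ≤ T} φ(Xₙ) ∨ 0] = ∑ₖ (1-α) αᵏ E_x[max_{n ≤ k} φ(Xₙ) ∨ 0] < ∞`. -/
def Setup.KilledSupFin (S : Setup E Ω) (φ : E → ℝ) : Prop :=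
  ∀ x : E,
    (∑' k : ℕ, ENNReal.ofReal ((1 - S.α) * S.α ^ k) *
      ∫⁻ ω, (Finset.range (k + 1)).sup (fun n => ENNReal.ofReal (φ (S.X n ω))) ∂ S.P x) < ⊤

/-- Standing integrability assumption: `sup_n |φ(X̃ₙ)| ∈ L¹(P_x)` for every `x`. -/
def Setup.KilledSupInt (S : Setup E Ω) (φ : E → ℝ) : Prop :=
  S.KilledSupFin fun x => |φ x|

/-- `(τ₁, τ₂)` is a Nash equilibrium for `x`: each player's stopping time attains the
supremum of the expected reward over admissible stopping times, the opponent's being fixed. -/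
def Setup.IsNashAt (S : Setup E Ω) (f g h : Fin 2 → E → ℝ) (τ₁ τ₂ : Ω → ℕ∞) (x : E) : Prop :=
  (S.J (f 0) (g 0) (h 0) τ₁ τ₂ x = ⨆ σ : S.Adm 0, S.J (f 0) (g 0) (h 0) σ.1 τ₂ x) ∧
    (S.J (f 1) (g 1) (h 1) τ₂ τ₁ x = ⨆ σ : S.Adm 1, S.J (f 1) (g 1) (h 1) σ.1 τ₁ x)

/-- `(p 0, p 1)` is a global Markovian randomized equilibrium: the associated pair of
Markovian randomized stopping times is a Nash equilibrium for every `x ∈ E`. -/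
def Setup.IsGlobalEq (S : Setup E Ω) (f g h : Fin 2 → E → ℝ) (p : Fin 2 → E → ℝ) : Prop :=
  IsStrategy (p 0) ∧ IsStrategy (p 1) ∧
    ∀ x : E, S.IsNashAt f g h (S.mrst 0 (p 0)) (S.mrst 1 (p 1)) x

/-- Zero-sum game: `(p₁, p₂)` is a global Markovian randomized equilibrium when for every `x`,
`τ^{p₁}` maximizes `J₁(x; ·, τ^{p₂})` over `𝒯₁` and `τ^{p₂}` minimizes `J₁(x; τ^{p₁}, ·)`
over `𝒯₂`. -/
def Setup.IsZSEq (S : Setup E Ω) (f g h : E → ℝ) (p₁ p₂ : E → ℝ) : Prop :=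
  IsStrategy p₁ ∧ IsStrategy p₂ ∧
    ∀ x : E,
      (S.J f g h (S.mrst 0 p₁) (S.mrst 1 p₂) x =
        ⨆ σ : S.Adm 0, S.J f g h σ.1 (S.mrst 1 p₂) x) ∧
      (S.J f g h (S.mrst 0 p₁) (S.mrst 1 p₂) x =
        ⨅ σ : S.Adm 1, S.J f g h (S.mrst 0 p₁) σ.1 x)


/-- The middle value of three reals: `med a b c = min (max a b) (min (max a c) (max b c))`. -/
def med (a b c : ℝ) : ℝ := min (min (max a b) (max a c)) (max b c)

/-- `V` solves the fixed point equation `V(x) = med(f(x), αΠV(x), g(x))` when `f(x) < g(x)`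
and `V(x) = h(x)` when `f(x) ≥ g(x)`. -/
def Setup.SolvesMed (S : Setup E Ω) (f g h V : E → ℝ) : Prop :=
  ∀ x : E, (f x < g x → V x = med (f x) (S.α * S.kint V x) (g x)) ∧
    (g x ≤ f x → V x = h x)

/-!
Let `T` be the Bellman operator, `T W = med(f, α Π W, g)` on `{f < g}` and `T W = h` elsewhere.
Since `med` is `1`-Lipschitz in its middle argument, `|T U - T W| ≤ α Π |U - W|`, and since
`h = med(f, h, g)`, every `T W` is bounded by `M = |f| + |g|`. Iterating the contraction along the
chain (Markov property) gives `|U - W|(x) ≤ αⁿ E_x[|U - W|(Xₙ)]`, and the integrability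
assumption on the killed process is exactly what makes `∑ₙ αⁿ E_x[M(Xₙ)]` finite. Hence two
solutions coincide, and the value iterates `Tⁿ h` converge pointwise; by dominated convergence
their limit is a fixed point of `T`.
-/

open scoped ENNReal

lemma abs_med_le (a b c : ℝ) : |med a b c| ≤ |a| + |c| := by
  unfold med; rw [abs_le]; constructor <;> cases abs_cases a <;> cases abs_cases c <;> grind

lemma abs_med_sub_med_le (a b b' c : ℝ) : |med a b c - med a b' c| ≤ |b - b'| := by
  unfold med; rw [abs_le]; constructor <;> cases abs_cases (b - b') <;> grind

lemma tendsto_med {ι : Type*} {l : Filter ι} {b : ι → ℝ} {b₀ : ℝ} (a c : ℝ)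
    (hb : Tendsto b l (𝓝 b₀)) : Tendsto (fun i => med a (b i) c) l (𝓝 (med a b₀ c)) :=
  ((tendsto_const_nhds.max hb).min tendsto_const_nhds).min (hb.max tendsto_const_nhds)

lemma enorm_sub_le_of_abs_le {u v a b : ℝ} (hu : |u| ≤ |a| + |b|) (hv : |v| ≤ |a| + |b|) :
    ‖u - v‖ₑ ≤ 2 * (‖a‖ₑ + ‖b‖ₑ) := by
  simp only [Real.enorm_eq_ofReal_abs]
  rw [← ENNReal.ofReal_add (abs_nonneg a) (abs_nonneg b), ← ENNReal.ofReal_ofNat 2,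
    ← ENNReal.ofReal_mul zero_le_two]
  exact ENNReal.ofReal_le_ofReal (by linarith [abs_sub u v])

attribute [instance] Setup.isProb Setup.isMarkovKernel

namespace Setup

variable (S : Setup E Ω)

lemma lintegral_comp_X_zero (u : E → ℝ≥0∞) (x : E) : ∫⁻ ω, u (S.X 0 ω) ∂S.P x = u x := by
  rw [lintegral_congr_ae ((S.init x).mono fun ω hω => by rw [hω]), lintegral_const,
    measure_univ, mul_one]

lemma map_X_succ (x : E) (n : ℕ) :
    (S.P x).map (S.X (n + 1)) = S.K ∘ₘ (S.P x).map (S.X n) := by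
  ext s hs
  rw [Measure.map_apply (S.measX _) hs, Measure.bind_apply hs S.K.aemeasurable,
    lintegral_map (S.K.measurable_coe hs) (S.measX n)]
  have h := S.markov x n (fun _ => 1) (s.indicator 1) measurable_const
    (measurable_const.indicator hs) ⟨1, fun _ => by simp⟩
    ⟨1, fun y => by by_cases hy : y ∈ s <;> simp [hy]⟩
  simp only [one_mul, integral_indicator_one hs] at h
  rw [show (fun ω => s.indicator (1 : E → ℝ) (S.X (n + 1) ω)) = (S.X (n + 1) ⁻¹' s).indicator 1
    from rfl, integral_indicator_one (S.measX _ hs)] at h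
  simp only [Measure.real] at h
  rw [integral_toReal (f := fun ω => S.K (S.X n ω) s)
    ((S.K.measurable_coe hs).comp (S.measX n)).aemeasurable
      (Eventually.of_forall fun _ => measure_lt_top _ _)] at h
  refine (ENNReal.toReal_eq_toReal_iff' (measure_ne_top _ _) ?_).mp h
  exact ne_top_of_le_ne_top (b := ∫⁻ _, 1 ∂S.P x) (by simp)
    (lintegral_mono fun _ => prob_le_one)

lemma lintegral_comp_X_succ {u : E → ℝ≥0∞} (hu : Measurable u) (x : E) (n : ℕ) :
    ∫⁻ ω, u (S.X (n + 1) ω) ∂S.P x = ∫⁻ ω, ∫⁻ y, u y ∂S.K (S.X n ω) ∂S.P x := by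
  rw [← lintegral_map hu (S.measX _), map_X_succ, Measure.lintegral_bind S.K.aemeasurable
    hu.aemeasurable, lintegral_map hu.lintegral_kernel (S.measX n)]

lemma tsum_pow_mul_lintegral_enorm_ne_top {φ : E → ℝ} (hφ : S.KilledSupInt φ) (x : E) :
    ∑' n, ENNReal.ofReal S.α ^ n * ∫⁻ ω, ‖φ (S.X n ω)‖ₑ ∂S.P x ≠ ⊤ := by
  have hc : ENNReal.ofReal (1 - S.α) ≠ 0 := by simpa using S.α_lt_one
  intro htop
  refine (hφ x).ne (top_le_iff.mp ?_)
  calc ⊤ = ENNReal.ofReal (1 - S.α) *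
        ∑' n, ENNReal.ofReal S.α ^ n * ∫⁻ ω, ‖φ (S.X n ω)‖ₑ ∂S.P x := by
        rw [htop, ENNReal.mul_top hc]
    _ ≤ _ := by
      rw [← ENNReal.tsum_mul_left]
      refine ENNReal.tsum_le_tsum fun n => ?_
      rw [ENNReal.ofReal_mul (by linarith [S.α_lt_one]), ENNReal.ofReal_pow S.α_pos.le,
        ← mul_assoc]
      gcongr with ω
      rw [Real.enorm_eq_ofReal_abs]
      exact Finset.le_sup (f := fun k => ENNReal.ofReal |φ (S.X k ω)|)
        (Finset.self_mem_range_succ n)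

lemma integrable_K_of_killedSupInt {φ : E → ℝ} (hφm : Measurable φ) (hφ : S.KilledSupInt φ)
    (x : E) : Integrable φ (S.K x) := by
  refine ⟨hφm.aestronglyMeasurable, ?_⟩
  have hα : ENNReal.ofReal S.α ≠ 0 := by simpa using S.α_pos
  have h1 := ENNReal.ne_top_of_tsum_ne_top (S.tsum_pow_mul_lintegral_enorm_ne_top hφ x) 1
  rw [pow_one, S.lintegral_comp_X_succ hφm.enorm, S.lintegral_comp_X_zero
    (fun y => ∫⁻ z, ‖φ z‖ₑ ∂S.K y)] at h1
  exact lt_top_iff_ne_top.mpr fun htop => h1 (by rw [htop, ENNReal.mul_top hα])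

lemma le_pow_mul_lintegral {a : ℝ≥0∞} {d : ℕ → E → ℝ≥0∞} (hd : ∀ n, Measurable (d n))
    (hstep : ∀ n y, d (n + 1) y ≤ a * ∫⁻ z, d n z ∂S.K y) (n : ℕ) (x : E) :
    d n x ≤ a ^ n * ∫⁻ ω, d 0 (S.X n ω) ∂S.P x := by
  suffices h : ∀ m k,
      ∫⁻ ω, d m (S.X k ω) ∂S.P x ≤ a ^ m * ∫⁻ ω, d 0 (S.X (k + m) ω) ∂S.P x by
    simpa [lintegral_comp_X_zero] using h n 0
  intro m
  induction m with
  | zero => simp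
  | succ m ih =>
    intro k
    calc ∫⁻ ω, d (m + 1) (S.X k ω) ∂S.P x
        ≤ ∫⁻ ω, a * ∫⁻ z, d m z ∂S.K (S.X k ω) ∂S.P x := lintegral_mono fun ω => hstep m _
      _ = a * ∫⁻ ω, d m (S.X (k + 1) ω) ∂S.P x := by
        rw [lintegral_const_mul a (f := fun ω => ∫⁻ z, d m z ∂S.K (S.X k ω))
            ((hd m).lintegral_kernel.comp (S.measX k)),
          S.lintegral_comp_X_succ (hd m)]
      _ ≤ a * (a ^ m * ∫⁻ ω, d 0 (S.X (k + 1 + m) ω) ∂S.P x) := by gcongr; exact ih (k + 1)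
      _ = a ^ (m + 1) * ∫⁻ ω, d 0 (S.X (k + (m + 1)) ω) ∂S.P x := by
        rw [← mul_assoc, ← pow_succ', add_right_comm, add_assoc]

lemma tsum_ne_top_of_contraction {a : ℝ≥0∞} {B : E → ℝ≥0∞} {d : ℕ → E → ℝ≥0∞}
    (hd : ∀ n, Measurable (d n)) (hstep : ∀ n y, d (n + 1) y ≤ a * ∫⁻ z, d n z ∂S.K y)
    (h0 : ∀ y, d 0 y ≤ B y) (x : E) (hB : ∑' n, a ^ n * ∫⁻ ω, B (S.X n ω) ∂S.P x ≠ ⊤) :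
    ∑' n, d n x ≠ ⊤ :=
  ne_top_of_le_ne_top hB <| ENNReal.tsum_le_tsum fun n =>
    (S.le_pow_mul_lintegral hd hstep n x).trans (by gcongr with ω; exact h0 _)

lemma tsum_pow_mul_lintegral_two_mul_ne_top {f g : E → ℝ} (hfm : Measurable f)
    (hf : S.KilledSupInt f) (hg : S.KilledSupInt g) (x : E) :
    ∑' n, ENNReal.ofReal S.α ^ n * ∫⁻ ω, 2 * (‖f (S.X n ω)‖ₑ + ‖g (S.X n ω)‖ₑ) ∂S.P x ≠ ⊤ := by
  have hsplit : ∀ n, ENNReal.ofReal S.α ^ n *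
      ∫⁻ ω, 2 * (‖f (S.X n ω)‖ₑ + ‖g (S.X n ω)‖ₑ) ∂S.P x =
      2 * (ENNReal.ofReal S.α ^ n * ∫⁻ ω, ‖f (S.X n ω)‖ₑ ∂S.P x +
        ENNReal.ofReal S.α ^ n * ∫⁻ ω, ‖g (S.X n ω)‖ₑ ∂S.P x) := fun n => by
    rw [lintegral_const_mul' _ _ ENNReal.ofNat_ne_top,
      lintegral_add_left (f := fun ω => ‖f (S.X n ω)‖ₑ) (hfm.comp (S.measX n)).enorm]
    ring
  rw [tsum_congr hsplit, ENNReal.tsum_mul_left, ENNReal.tsum_add]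
  exact ENNReal.mul_ne_top ENNReal.ofNat_ne_top (ENNReal.add_ne_top.mpr
    ⟨S.tsum_pow_mul_lintegral_enorm_ne_top hf x, S.tsum_pow_mul_lintegral_enorm_ne_top hg x⟩)

lemma measurable_kint {V : E → ℝ} (hV : Measurable V) : Measurable (S.kint V) :=
  (StronglyMeasurable.integral_kernel_prod_right (κ := S.K) (f := fun _ y => V y)
    (hV.comp measurable_snd).stronglyMeasurable).measurable

def bellman (f g h W : E → ℝ) (x : E) : ℝ :=
  if f x < g x then med (f x) (S.α * S.kint W x) (g x) else h x

variable {f g h : E → ℝ}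

lemma solvesMed_iff_bellman_eq {V : E → ℝ} : S.SolvesMed f g h V ↔ S.bellman f g h V = V := by
  simp only [SolvesMed, bellman, funext_iff]
  refine forall_congr' fun x => ?_
  by_cases hfg : f x < g x
  · simp [hfg, eq_comm]
  · simp [hfg, not_lt.mp hfg, eq_comm]

lemma measurable_bellman (hf : Measurable f) (hg : Measurable g) (hh : Measurable h)
    {W : E → ℝ} (hW : Measurable W) : Measurable (S.bellman f g h W) := by
  have hk : Measurable fun x => S.α * S.kint W x := (S.measurable_kint hW).const_mul _
  exact Measurable.ite (measurableSet_lt hf hg)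
    (((hf.max hk).min (hf.max hg)).min (hk.max hg)) hh

lemma abs_bellman_le (hmed : ∀ x, h x = med (f x) (h x) (g x)) (W : E → ℝ) (x : E) :
    |S.bellman f g h W x| ≤ |f x| + |g x| := by
  unfold bellman
  split_ifs
  · exact abs_med_le _ _ _
  · rw [hmed x]; exact abs_med_le _ _ _

lemma enorm_bellman_sub_le {U₁ U₂ : E → ℝ} {x : E} (h₁ : Integrable U₁ (S.K x))
    (h₂ : Integrable U₂ (S.K x)) :
    ‖S.bellman f g h U₁ x - S.bellman f g h U₂ x‖ₑ ≤
      ENNReal.ofReal S.α * ∫⁻ y, ‖U₁ y - U₂ y‖ₑ ∂S.K x := by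
  unfold bellman
  split_ifs
  · calc ‖med (f x) (S.α * S.kint U₁ x) (g x) - med (f x) (S.α * S.kint U₂ x) (g x)‖ₑ
        ≤ ‖S.α * S.kint U₁ x - S.α * S.kint U₂ x‖ₑ := by
          simp only [Real.enorm_eq_ofReal_abs]
          exact ENNReal.ofReal_le_ofReal (abs_med_sub_med_le _ _ _ _)
      _ = ENNReal.ofReal S.α * ‖∫ y, U₁ y - U₂ y ∂S.K x‖ₑ := by
          rw [← mul_sub, enorm_mul, Real.enorm_of_nonneg S.α_pos.le, kint, kint,
            integral_sub h₁ h₂]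
      _ ≤ _ := by gcongr; exact enorm_integral_le_lintegral_enorm _
  · simp

lemma tendsto_bellman {W : ℕ → E → ℝ} {V M : E → ℝ} {x : E} (hW : ∀ n, Measurable (W n))
    (hM : Integrable M (S.K x)) (hWM : ∀ n y, |W n y| ≤ M y)
    (hWV : ∀ y, Tendsto (fun n => W n y) atTop (𝓝 (V y))) :
    Tendsto (fun n => S.bellman f g h (W n) x) atTop (𝓝 (S.bellman f g h V x)) := by
  unfold bellman
  split_ifs
  · refine tendsto_med _ _ (Tendsto.const_mul _ ?_)
    exact tendsto_integral_of_dominated_convergence M (fun n => (hW n).aestronglyMeasurable) hM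
      (fun n => Eventually.of_forall (hWM n)) (Eventually.of_forall hWV)
  · exact tendsto_const_nhds

lemma integrable_K_abs_add_abs (hfm : Measurable f) (hgm : Measurable g)
    (hf : S.KilledSupInt f) (hg : S.KilledSupInt g) (x : E) :
    Integrable (fun y => |f y| + |g y|) (S.K x) :=
  (S.integrable_K_of_killedSupInt hfm hf x).abs.add (S.integrable_K_of_killedSupInt hgm hg x).abs

lemma integrable_K_of_abs_le (hfm : Measurable f) (hgm : Measurable g)
    (hf : S.KilledSupInt f) (hg : S.KilledSupInt g) {U : E → ℝ} (hU : Measurable U)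
    (hUb : ∀ y, |U y| ≤ |f y| + |g y|) (x : E) : Integrable U (S.K x) :=
  (S.integrable_K_abs_add_abs hfm hgm hf hg x).mono' hU.aestronglyMeasurable
    (Eventually.of_forall hUb)

lemma abs_le_of_solvesMed (hmed : ∀ x, h x = med (f x) (h x) (g x)) {V : E → ℝ}
    (hV : S.SolvesMed f g h V) (y : E) : |V y| ≤ |f y| + |g y| := by
  have hb := S.abs_bellman_le hmed V y
  rwa [S.solvesMed_iff_bellman_eq.mp hV] at hb

lemma eq_of_solvesMed (hfm : Measurable f) (hgm : Measurable g) (hf : S.KilledSupInt f)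
    (hg : S.KilledSupInt g) (hmed : ∀ x, h x = med (f x) (h x) (g x)) {V₁ V₂ : E → ℝ}
    (hV₁m : Measurable V₁) (hV₁ : S.SolvesMed f g h V₁)
    (hV₂m : Measurable V₂) (hV₂ : S.SolvesMed f g h V₂) : V₁ = V₂ := by
  have hb₁ := S.abs_le_of_solvesMed hmed hV₁
  have hb₂ := S.abs_le_of_solvesMed hmed hV₂
  set d : E → ℝ≥0∞ := fun y => ‖V₁ y - V₂ y‖ₑ
  have hstep : ∀ y, d y ≤ ENNReal.ofReal S.α * ∫⁻ z, d z ∂S.K y := fun y => by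
    have hc := S.enorm_bellman_sub_le (f := f) (g := g) (h := h)
      (S.integrable_K_of_abs_le hfm hgm hf hg hV₁m hb₁ y)
      (S.integrable_K_of_abs_le hfm hgm hf hg hV₂m hb₂ y)
    rwa [S.solvesMed_iff_bellman_eq.mp hV₁, S.solvesMed_iff_bellman_eq.mp hV₂] at hc
  funext x
  have hsum := S.tsum_ne_top_of_contraction (d := fun _ => d)
    (fun _ => (hV₁m.sub hV₂m).enorm) (fun _ => hstep)
    (fun y => enorm_sub_le_of_abs_le (hb₁ y) (hb₂ y)) x
    (S.tsum_pow_mul_lintegral_two_mul_ne_top hfm hf hg x)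
  have hd : d x = 0 := by
    by_contra hne
    exact hsum (ENNReal.tsum_const_eq_top_of_ne_zero hne)
  simpa [d, sub_eq_zero] using hd

lemma exists_solvesMed (hfm : Measurable f) (hgm : Measurable g) (hhm : Measurable h)
    (hf : S.KilledSupInt f) (hg : S.KilledSupInt g)
    (hmed : ∀ x, h x = med (f x) (h x) (g x)) : ∃ V, Measurable V ∧ S.SolvesMed f g h V := by
  set W : ℕ → E → ℝ := fun n => (S.bellman f g h)^[n] h
  have hW_succ : ∀ n, W (n + 1) = S.bellman f g h (W n) := fun n =>
    Function.iterate_succ_apply' _ n h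
  have hWm : ∀ n, Measurable (W n) := by
    intro n
    induction n with
    | zero => exact hhm
    | succ n ih => rw [hW_succ]; exact S.measurable_bellman hfm hgm hhm ih
  have hWb : ∀ n y, |W n y| ≤ |f y| + |g y| := by
    rintro (_ | n) y
    · change |h y| ≤ _
      rw [hmed y]; exact abs_med_le _ _ _
    · rw [hW_succ]; exact S.abs_bellman_le hmed _ y
  have hWint := fun n => S.integrable_K_of_abs_le hfm hgm hf hg (hWm n) (hWb n)
  have hsum : ∀ x, ∑' n, ‖W (n + 1) x - W n x‖ₑ ≠ ⊤ := fun x =>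
    S.tsum_ne_top_of_contraction (fun n => ((hWm (n + 1)).sub (hWm n)).enorm)
      (fun n y => by
        have hc := S.enorm_bellman_sub_le (f := f) (g := g) (h := h)
          (hWint (n + 1) y) (hWint n y)
        rwa [← hW_succ (n + 1), ← hW_succ n] at hc)
      (fun y => enorm_sub_le_of_abs_le (hWb 1 y) (hWb 0 y))
      x (S.tsum_pow_mul_lintegral_two_mul_ne_top hfm hf hg x)
  have hWV : ∀ x, Tendsto (fun n => W n x) atTop (𝓝 (limUnder atTop fun n => W n x)) :=
    fun x => (cauchySeq_of_edist_le_of_tsum_ne_top _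
      (fun n => by rw [edist_comm, edist_eq_enorm_sub]) (hsum x)).tendsto_limUnder
  refine ⟨_, measurable_of_tendsto_metrizable hWm (tendsto_pi_nhds.mpr hWV),
    S.solvesMed_iff_bellman_eq.mpr (funext fun x => tendsto_nhds_unique ?_ (hWV x))⟩
  have hlim := S.tendsto_bellman (f := f) (g := g) (h := h) hWm
    (S.integrable_K_abs_add_abs hfm hgm hf hg x) hWb hWV
  simp_rw [← hW_succ] at hlim
  exact (tendsto_add_atTop_iff_nat 1).mp hlim

end Setup

theorem statement10_general (S : Setup E Ω) (f g h : E → ℝ)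
    (hmf : Measurable f) (hmg : Measurable g) (hmh : Measurable h)
    (hIf : S.KilledSupInt f) (hIg : S.KilledSupInt g)
    (hmed : ∀ x : E, h x = med (f x) (h x) (g x)) :
    (∃ V : E → ℝ, Measurable V ∧ S.SolvesMed f g h V) ∧
      ∀ V₁ V₂ : E → ℝ, Measurable V₁ → S.SolvesMed f g h V₁ →
        Measurable V₂ → S.SolvesMed f g h V₂ → V₁ = V₂ :=
  ⟨S.exists_solvesMed hmf hmg hmh hIf hIg hmed,
    fun _ _ hV₁m hV₁ hV₂m hV₂ =>
      S.eq_of_solvesMed hmf hmg hIf hIg hmed hV₁m hV₁ hV₂m hV₂⟩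

/-- If `h = med(f, h, g)` pointwise, then there is exactly one measurable `V : E → ℝ`
solving the zero-sum Wald–Bellman equation. -/
theorem statement10 (S : Setup E Ω) (f g h : E → ℝ)
    (hmf : Measurable f) (hmg : Measurable g) (hmh : Measurable h)
    (hIf : S.KilledSupInt f) (hIg : S.KilledSupInt g) (hIh : S.KilledSupInt h)
    (hmed : ∀ x : E, h x = med (f x) (h x) (g x)) :
    (∃ V : E → ℝ, Measurable V ∧ S.SolvesMed f g h V) ∧
      ∀ V₁ V₂ : E → ℝ, Measurable V₁ → S.SolvesMed f g h V₁ →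
        Measurable V₂ → S.SolvesMed f g h V₂ → V₁ = V₂ :=
  statement10_general S f g h hmf hmg hmh hIf hIg hmed

end DynkinGame
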